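/- arXiv:1411.4197 — 7 statements merged into one kernel-verified Lean document; each statement's English description precedes it below -/
import Mathlib

section
/- If V is a homogeneous subspace of C[x_{ij}], then the polarization closure of the derivative closure of V equals the derivative closure of the polarization closure of V: E(D(V)) = D(E(V)). -/
open MvPolynomial

variable (ℓ n : ℕ)

/-- `V` is closed under all partial derivatives `∂/∂x_{ij}`. -/
def ClosedUnderDeriv (V : Submodule ℂ (MvPolynomial (Fin ℓ × Fin n) ℂ)) : Prop :=
  ∀ g ∈ V, ∀ v : Fin ℓ × Fin n, pderiv v g ∈ V

/-- `V` is closed under all generalized polarization operators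
`E_{i,k}^{(p)}(g) = Σ_j x_{ij} ∂^p g / ∂x_{kj}^p`. -/
def ClosedUnderPolarization (V : Submodule ℂ (MvPolynomial (Fin ℓ × Fin n) ℂ)) : Prop :=
  ∀ g ∈ V, ∀ i k : Fin ℓ, ∀ p : ℕ, 1 ≤ p →
    (∑ j : Fin n, X (i, j) * ((pderiv (k, j)).toLinearMap ^ p) g) ∈ V

/-- The derivative closure `D(V)`: the smallest subspace containing `V`
closed under partial derivatives. -/
noncomputable def derivClosure (V : Submodule ℂ (MvPolynomial (Fin ℓ × Fin n) ℂ)) :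
    Submodule ℂ (MvPolynomial (Fin ℓ × Fin n) ℂ) :=
  sInf {W | V ≤ W ∧ ClosedUnderDeriv ℓ n W}

/-- The polarization closure `E(V)`: the smallest subspace containing `V`
closed under polarization operators. -/
noncomputable def polarClosure (V : Submodule ℂ (MvPolynomial (Fin ℓ × Fin n) ℂ)) :
    Submodule ℂ (MvPolynomial (Fin ℓ × Fin n) ℂ) :=
  sInf {W | V ≤ W ∧ ClosedUnderPolarization ℓ n W}

/-- `V` is a homogeneous subspace: it contains the `ℕ^ℓ`-multigraded homogeneous
components of all of its elements. -/
def IsMultiHomogeneousSubspace (V : Submodule ℂ (MvPolynomial (Fin ℓ × Fin n) ℂ)) : Prop :=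
  ∀ g ∈ V, ∀ d : Fin ℓ →₀ ℕ,
    weightedHomogeneousComponent (fun v : Fin ℓ × Fin n => Finsupp.single v.1 1) d g ∈ V

/-!
The commutator of a partial derivative with a polarization operator is again a differential
operator: `[∂/∂x_{ab}, E_{i,k}^{(p)}] = δ_{ai} ∂^p/∂x_{kb}^p`, an element of the algebra `𝒜`
generated by the partial derivatives. Hence the elements `g` of `E(D(V))` with `𝒜 g ⊆ E(D(V))`
form a polarization-closed subspace containing `D(V)`, so `E(D(V))` is closed under derivatives;
dually, the `g ∈ D(E(V))` with `E g ∈ D(E(V))` for all polarizations `E` form a derivative-closed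
subspace containing `E(V)`. Both iterated closures are thus closed under both kinds of operators,
and each is contained in the other.
-/

open Module

theorem Algebra.mul_sub_mul_mem_adjoin {R A : Type*} [CommSemiring R] [Ring A] [Algebra R A]
    {s : Set A} {e : A} (h : ∀ d ∈ s, d * e - e * d ∈ adjoin R s) {a : A} (ha : a ∈ adjoin R s) :
    a * e - e * a ∈ adjoin R s := by
  induction ha using Algebra.adjoin_induction with
  | mem d hd => exact h d hd
  | algebraMap r => simp [Algebra.commutes]
  | add a b _ _ ha hb => simpa [add_mul, mul_add, add_sub_add_comm] using add_mem ha hb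
  | mul a b haA hbA ha hb =>
    have : a * b * e - e * (a * b) = a * (b * e - e * b) + (a * e - e * a) * b := by noncomm_ring
    exact this ▸ add_mem (mul_mem haA hb) (mul_mem ha hbA)

namespace Submodule

section Closure

variable {R M : Type*} [CommSemiring R] [AddCommMonoid M] [Module R M]

def IsInvtUnder (F : Set (End R M)) (W : Submodule R M) : Prop :=
  ∀ f ∈ F, W ∈ f.invtSubmodule

noncomputable def invtClosure (F : Set (End R M)) (V : Submodule R M) : Submodule R M :=
  sInf {W | V ≤ W ∧ IsInvtUnder F W}

variable {F : Set (End R M)} {U V W : Submodule R M}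

theorem le_invtClosure (F : Set (End R M)) (V : Submodule R M) : V ≤ invtClosure F V :=
  le_sInf fun _ hW => hW.1

theorem isInvtUnder_invtClosure (F : Set (End R M)) (V : Submodule R M) :
    IsInvtUnder F (invtClosure F V) := fun f hf _ hg =>
  mem_sInf.2 fun W hW => hW.2 f hf (mem_sInf.1 hg W hW)

theorem invtClosure_le (hVW : V ≤ W) (hW : IsInvtUnder F W) : invtClosure F V ≤ W :=
  sInf_le ⟨hVW, hW⟩

theorem invtClosure_mono (h : U ≤ V) : invtClosure F U ≤ invtClosure F V :=
  invtClosure_le (h.trans (le_invtClosure F V)) (isInvtUnder_invtClosure F V)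

theorem IsInvtUnder.adjoin (hW : IsInvtUnder F W) : IsInvtUnder (Algebra.adjoin R F) W := by
  intro a ha
  induction ha using Algebra.adjoin_induction with
  | mem f hf => exact hW f hf
  | algebraMap r =>
    intro g hg
    rw [mem_comap, Module.algebraMap_end_apply]
    exact W.smul_mem r hg
  | add a b _ _ ha hb => exact End.invtSubmodule_inf_invtSubmodule_le_invtSubmodule_add a b ⟨ha, hb⟩
  | mul a b _ _ ha hb => exact End.invtSubmodule.comp a ha hb

end Closure

section Commutation

variable {R M : Type*} [CommRing R] [AddCommGroup M] [Module R M]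
  {D P : Set (End R M)} {U : Submodule R M}

theorem IsInvtUnder.invtClosure_of_commutator_mem_adjoin
    (hDP : ∀ d ∈ D, ∀ e ∈ P, d * e - e * d ∈ Algebra.adjoin R D) (hU : IsInvtUnder D U) :
    IsInvtUnder D (invtClosure P U) := by
  set X := invtClosure P U
  -- `W` must be stable under all of `adjoin R D`, not only `D`, to absorb the commutators.
  set W := ⨅ a : Algebra.adjoin R D, X.comap (a : End R M)
  have mem_W (g : M) : g ∈ W ↔ ∀ a ∈ Algebra.adjoin R D, a g ∈ X := by
    simp [W, mem_iInf]
  have hXW : X ≤ W := by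
    refine invtClosure_le (fun g hg => (mem_W g).2 fun a ha => ?_) fun e he g hg => ?_
    · exact le_invtClosure P U (hU.adjoin a ha hg)
    · refine (mem_W _).2 fun a ha => ?_
      have hae : a (e g) = e (a g) + (a * e - e * a) g := by simp
      rw [hae]
      exact X.add_mem (isInvtUnder_invtClosure P U e he ((mem_W g).1 hg a ha))
        ((mem_W g).1 hg _ (Algebra.mul_sub_mul_mem_adjoin (fun d hd => hDP d hd e he) ha))
  exact fun d hd g hg => (mem_W g).1 (hXW hg) d (Algebra.subset_adjoin hd)

theorem IsInvtUnder.invtClosure_of_commutator_mem_adjoin'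
    (hDP : ∀ d ∈ D, ∀ e ∈ P, d * e - e * d ∈ Algebra.adjoin R D) (hU : IsInvtUnder P U) :
    IsInvtUnder P (invtClosure D U) := by
  set Y := invtClosure D U
  have hY : IsInvtUnder (Algebra.adjoin R D) Y := (isInvtUnder_invtClosure D U).adjoin
  set W := Y ⊓ ⨅ e : P, Y.comap (e : End R M)
  have mem_W (g : M) : g ∈ W ↔ g ∈ Y ∧ ∀ e ∈ P, e g ∈ Y := by
    simp [W, mem_iInf]
  have hYW : Y ≤ W := by
    refine invtClosure_le (fun g hg => (mem_W g).2 ⟨le_invtClosure D U hg,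
      fun e he => le_invtClosure D U (hU e he hg)⟩) fun d hd g hg => ?_
    obtain ⟨hgY, hePY⟩ := (mem_W g).1 hg
    refine (mem_W _).2 ⟨isInvtUnder_invtClosure D U d hd hgY, fun e he => ?_⟩
    have hed : e (d g) = d (e g) - (d * e - e * d) g := by simp
    rw [hed]
    exact sub_mem (isInvtUnder_invtClosure D U d hd (hePY e he)) (hY _ (hDP d hd e he) hgY)
  exact fun e he g hg => ((mem_W g).1 (hYW hg)).2 e he

theorem invtClosure_comm_of_commutator_mem_adjoin
    (hDP : ∀ d ∈ D, ∀ e ∈ P, d * e - e * d ∈ Algebra.adjoin R D) (V : Submodule R M) :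
    invtClosure P (invtClosure D V) = invtClosure D (invtClosure P V) :=
  le_antisymm
    (invtClosure_le (invtClosure_mono (le_invtClosure P V))
      ((isInvtUnder_invtClosure P V).invtClosure_of_commutator_mem_adjoin' hDP))
    (invtClosure_le (invtClosure_mono (le_invtClosure D V))
      ((isInvtUnder_invtClosure D V).invtClosure_of_commutator_mem_adjoin hDP))

end Commutation

end Submodule

namespace MvPolynomial

variable {K σ ι J : Type*} [CommRing K]

theorem commute_pderiv (v w : σ) :
    Commute (pderiv v : Derivation K (MvPolynomial σ K) _).toLinearMap (pderiv w).toLinearMap := by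
  classical
  have hvw : ⁅pderiv v, pderiv w⁆ = (0 : Derivation K (MvPolynomial σ K) _) :=
    derivation_ext fun i => by
      rw [Derivation.commutator_apply, pderiv_X, pderiv_X, Pi.single_apply, Pi.single_apply]
      split_ifs <;> simp
  refine LinearMap.ext fun f => sub_eq_zero.1 ?_
  simpa [Derivation.commutator_apply] using congr($hvw f)

variable (K σ) in
def pderivOps : Set (End K (MvPolynomial σ K)) :=
  Set.range fun v => (pderiv v).toLinearMap

variable [Fintype J]

noncomputable def polarization (i k : ι) (p : ℕ) : End K (MvPolynomial (ι × J) K) :=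
  ∑ j, LinearMap.mulLeft K (X (i, j)) * (pderiv (k, j)).toLinearMap ^ p

theorem polarization_apply (i k : ι) (p : ℕ) (g : MvPolynomial (ι × J) K) :
    polarization i k p g = ∑ j, X (i, j) * ((pderiv (k, j)).toLinearMap ^ p) g := by
  simp [polarization, LinearMap.sum_apply]

variable (K ι J) in
def polarizationOps : Set (End K (MvPolynomial (ι × J) K)) :=
  {E | ∃ (i k : ι) (p : ℕ), 1 ≤ p ∧ polarization i k p = E}

theorem pderiv_mul_polarization_sub [DecidableEq ι] [DecidableEq J] (a : ι) (b : J) (i k : ι)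
    (p : ℕ) :
    (pderiv (a, b)).toLinearMap * polarization i k p
        - polarization i k p * (pderiv (a, b)).toLinearMap
      = if a = i then (pderiv (k, b)).toLinearMap ^ p else (0 : End K (MvPolynomial (ι × J) K)) := by
  refine LinearMap.ext fun g => ?_
  have hcomm (j : J) : pderiv (a, b) (((pderiv (k, j)).toLinearMap ^ p) g)
      = ((pderiv (k, j)).toLinearMap ^ p) (pderiv (a, b) g) :=
    congr($(((commute_pderiv (K := K) (a, b) (k, j)).pow_right p).eq) g)
  simp only [LinearMap.sub_apply, Module.End.mul_apply, polarization_apply, map_sum,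
    Derivation.coeFn_coe, pderiv_mul, hcomm, Finset.sum_add_distrib, add_sub_cancel_right, pderiv_X]
  split_ifs with hai
  · simp [hai, Pi.single_apply]
  · simp [Ne.symm hai]

theorem commutator_pderivOps_polarizationOps_mem_adjoin :
    ∀ d ∈ pderivOps K (ι × J), ∀ e ∈ polarizationOps K ι J,
      d * e - e * d ∈ Algebra.adjoin K (pderivOps K (ι × J)) := by
  classical
  rintro _ ⟨⟨a, b⟩, rfl⟩ _ ⟨i, k, p, -, rfl⟩
  rw [pderiv_mul_polarization_sub]
  split_ifs
  exacts [pow_mem (Algebra.subset_adjoin (Set.mem_range_self (k, b))) p, zero_mem _]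

end MvPolynomial

open Submodule

theorem derivClosure_eq_invtClosure (V : Submodule ℂ (MvPolynomial (Fin ℓ × Fin n) ℂ)) :
    derivClosure ℓ n V = invtClosure (pderivOps ℂ (Fin ℓ × Fin n)) V := by
  have hclosed (W : Submodule ℂ (MvPolynomial (Fin ℓ × Fin n) ℂ)) :
      ClosedUnderDeriv ℓ n W ↔ IsInvtUnder (pderivOps ℂ (Fin ℓ × Fin n)) W :=
    ⟨fun h _ ⟨v, hv⟩ g hg => hv ▸ h g hg v, fun h g hg v => h _ ⟨v, rfl⟩ hg⟩
  simp only [derivClosure, invtClosure, hclosed]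

theorem polarClosure_eq_invtClosure (V : Submodule ℂ (MvPolynomial (Fin ℓ × Fin n) ℂ)) :
    polarClosure ℓ n V = invtClosure (polarizationOps ℂ (Fin ℓ) (Fin n)) V := by
  have hclosed (W : Submodule ℂ (MvPolynomial (Fin ℓ × Fin n) ℂ)) :
      ClosedUnderPolarization ℓ n W ↔ IsInvtUnder (polarizationOps ℂ (Fin ℓ) (Fin n)) W := by
    refine ⟨fun h _ ⟨i, k, p, hp, hE⟩ g hg => ?_, fun h g hg i k p hp => ?_⟩
    · rw [← hE, mem_comap, polarization_apply]
      exact h g hg i k p hp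
    · rw [← polarization_apply]
      exact h _ ⟨i, k, p, hp, rfl⟩ hg
  simp only [polarClosure, invtClosure, hclosed]

theorem polarClosure_derivClosure_comm
    (V : Submodule ℂ (MvPolynomial (Fin ℓ × Fin n) ℂ)) :
    polarClosure ℓ n (derivClosure ℓ n V) = derivClosure ℓ n (polarClosure ℓ n V) := by
  simp only [derivClosure_eq_invtClosure, polarClosure_eq_invtClosure]
  exact invtClosure_comm_of_commutator_mem_adjoin commutator_pderivOps_polarizationOps_mem_adjoin V
end

section
/- Let n ≥ 3 and let f = a·m_3 + b·m_{21} + c·m_{111} in R[x_1,...,x_n] with (a,b,c) not proportional to (1,3,6). Then f is an n-exception if and only if 6a(2b + (n−2)c) = 4(n−1)b². -/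
open MvPolynomial

/-- `E^{(2)}(f) = Σ_j x_j ∂²f/∂x_j²`. -/
noncomputable def polarE2 (n : ℕ) (f : MvPolynomial (Fin n) ℝ) : MvPolynomial (Fin n) ℝ :=
  ∑ j : Fin n, X j * pderiv j (pderiv j f)

/-- The span of the first-order partial derivatives of `f` together with `E^{(2)}(f)`. -/
noncomputable def exceptionSpan (n : ℕ) (f : MvPolynomial (Fin n) ℝ) :
    Submodule ℝ (MvPolynomial (Fin n) ℝ) :=
  Submodule.span ℝ (Set.range (fun j : Fin n => pderiv j f) ∪ {polarE2 n f})

/-- `f` is an `n`-exception if the span of `∂f/∂x_1, …, ∂f/∂x_n, E^{(2)}(f)`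
has dimension exactly `n`. -/
def IsException (n : ℕ) (f : MvPolynomial (Fin n) ℝ) : Prop :=
  Module.finrank ℝ (exceptionSpan n f) = n

/-- The monomial symmetric polynomial `m_3 = Σ_j x_j³`. -/
noncomputable def msym3 (n : ℕ) : MvPolynomial (Fin n) ℝ := ∑ j : Fin n, X j ^ 3

/-- The monomial symmetric polynomial `m_{21} = Σ_{i ≠ j} x_i² x_j`. -/
noncomputable def msym21 (n : ℕ) : MvPolynomial (Fin n) ℝ :=
  ∑ i : Fin n, ∑ j : Fin n, if i = j then 0 else X i ^ 2 * X j

/-- The monomial symmetric polynomial `m_{111} = Σ_{i < j < k} x_i x_j x_k`. -/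
noncomputable def msym111 (n : ℕ) : MvPolynomial (Fin n) ℝ :=
  ∑ s ∈ Finset.univ.powersetCard 3, ∏ a ∈ s, X a

/-!
The partial derivatives of `f = a m₃ + b m₂₁ + c m₁₁₁` are
`∂ⱼf = (3a - 3b + c) xⱼ² + (2b - c) xⱼ p₁ + b p₂ + c e₂`, and `E⁽²⁾(f) = 6a p₂ + 4b e₂`.
Evaluating a linear relation `∑ⱼ wⱼ ∂ⱼf + μ E⁽²⁾(f) = 0` at the points `eₖ` and `eᵢ + eₖ` forces
all `wⱼ` to equal a common value `l`, and then the relation holds exactly when `(l, μ)` lies in the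
kernel of the nonzero matrix `[[3a + (n-1)b, 6a], [4b + (n-2)c, 4b]]`. By rank–nullity the span
has dimension `n` exactly when this kernel is a line, i.e. when the determinant
`4(n-1)b² - 6a(2b + (n-2)c)` vanishes.
-/

namespace MvPolynomial

theorem pderiv_ofNat {σ R : Type*} [CommSemiring R] (i : σ) (m : ℕ) [m.AtLeastTwo] :
    pderiv i (no_index (OfNat.ofNat m : MvPolynomial σ R)) = 0 := by
  rw [← Nat.cast_ofNat]
  exact (pderiv i).map_natCast m

variable (σ R : Type*) [Fintype σ]

theorem two_mul_esymm_two [CommRing R] :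
    2 * esymm σ R 2 = psum σ R 1 ^ 2 - psum σ R 2 := by
  have h := psum_eq_mul_esymm_sub_sum σ R 2 (by norm_num)
  have e : {a ∈ Finset.HasAntidiagonal.antidiagonal 2 | a.1 ∈ Set.Ioo 0 2} = {(1, 1)} := by
    decide
  simp only [e, Finset.sum_singleton, esymm_one, ← psum_one] at h
  push_cast at h
  linear_combination h

theorem six_mul_esymm_three [CommRing R] :
    6 * esymm σ R 3 = psum σ R 1 ^ 3 - 3 * psum σ R 1 * psum σ R 2 + 2 * psum σ R 3 := by
  have h := psum_eq_mul_esymm_sub_sum σ R 3 (by norm_num)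
  have e :
      {a ∈ Finset.HasAntidiagonal.antidiagonal 3 | a.1 ∈ Set.Ioo 0 3} = {(1, 2), (2, 1)} := by
    decide
  simp only [e, Finset.sum_pair (by decide : ((1, 2) : ℕ × ℕ) ≠ (2, 1)), esymm_one,
    ← psum_one] at h
  push_cast at h
  linear_combination -2 * h + psum σ R 1 * two_mul_esymm_two σ R

variable {σ R}

theorem two_mul_eval_esymm_two [CommRing R] (x : σ → R) :
    2 * eval x (esymm σ R 2) = (∑ i, x i) ^ 2 - ∑ i, x i ^ 2 := by
  simpa [psum] using congrArg (eval x) (two_mul_esymm_two σ R)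

theorem pderiv_psum [CommSemiring R] (i : σ) (k : ℕ) :
    pderiv i (psum σ R k) = (k : MvPolynomial σ R) * X i ^ (k - 1) := by
  classical
  simp [psum, pderiv_X, Pi.single_apply]

variable [CommRing R] [IsDomain R] [CharZero R]

theorem pderiv_esymm_two (i : σ) : pderiv i (esymm σ R 2) = psum σ R 1 - X i := by
  have h := congrArg (pderiv i) (two_mul_esymm_two σ R)
  simp only [map_sub, pderiv_mul, pderiv_pow, pderiv_psum, pderiv_ofNat] at h
  refine mul_left_cancel₀ (two_ne_zero (α := MvPolynomial σ R)) ?_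
  linear_combination h

theorem pderiv_esymm_three (i : σ) :
    pderiv i (esymm σ R 3) = esymm σ R 2 - X i * psum σ R 1 + X i ^ 2 := by
  have h := congrArg (pderiv i) (six_mul_esymm_three σ R)
  simp only [map_add, map_sub, pderiv_mul, pderiv_pow, pderiv_psum, pderiv_ofNat] at h
  refine mul_left_cancel₀ (by norm_num : (6 : MvPolynomial σ R) ≠ 0) ?_
  linear_combination h - 3 * two_mul_esymm_two σ R

end MvPolynomial

theorem Matrix.finrank_ker_mulVecLin_fin_two_eq_one_iff {K : Type*} [Field K]
    (M : Matrix (Fin 2) (Fin 2) K) :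
    Module.finrank K (LinearMap.ker M.mulVecLin) = 1 ↔ M.det = 0 ∧ M ≠ 0 := by
  have hle : Module.finrank K (LinearMap.ker M.mulVecLin) ≤ 2 := by
    simpa using Submodule.finrank_le (LinearMap.ker M.mulVecLin)
  have h0 : Module.finrank K (LinearMap.ker M.mulVecLin) = 0 ↔ M.det ≠ 0 := by
    rw [Submodule.finrank_eq_zero, Ne, ← Matrix.exists_mulVec_eq_zero_iff,
      Matrix.ker_mulVecLin_eq_bot_iff]
    simp only [not_exists, not_and]
    exact forall_congr' fun _ => not_imp_not.symm
  have h2 : Module.finrank K (LinearMap.ker M.mulVecLin) = 2 ↔ M = 0 := by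
    rw [← Matrix.toLin'.map_eq_zero_iff, Matrix.toLin'_apply', ← LinearMap.ker_eq_top,
      Submodule.eq_top_iff_finrank_eq, Module.finrank_fin_fun]
  constructor
  · intro h
    exact ⟨not_not.mp (mt h0.mpr (by omega)), mt h2.mpr (by omega)⟩
  · rintro ⟨hdet, hM⟩
    have := mt h0.mp (not_not.mpr hdet)
    have := mt h2.mp hM
    omega

theorem msym21_eq_psum (n : ℕ) :
    msym21 n = psum (Fin n) ℝ 1 * psum (Fin n) ℝ 2 - psum (Fin n) ℝ 3 := by
  have h (i : Fin n) :
      (∑ j : Fin n, if i = j then 0 else X i ^ 2 * X j : MvPolynomial (Fin n) ℝ) =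
      ∑ j, X i ^ 2 * X j - X i ^ 3 := by
    rw [eq_sub_iff_add_eq, ← Finset.sum_erase_add _ _ (Finset.mem_univ i), if_pos rfl, add_zero,
      ← Finset.sum_erase_add _ _ (Finset.mem_univ i),
      Finset.sum_congr rfl fun j hj => if_neg (Finset.ne_of_mem_erase hj).symm]
    ring
  simp only [msym21, h, Finset.sum_sub_distrib, psum, pow_one, Finset.sum_mul_sum]
  rw [Finset.sum_comm]
  simp only [mul_comm]

section SymmetricCubic

variable (n : ℕ) (a b c : ℝ)

noncomputable def symCubic : MvPolynomial (Fin n) ℝ :=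
  a • msym3 n + b • msym21 n + c • msym111 n

noncomputable def symCubicPartial (j : Fin n) : MvPolynomial (Fin n) ℝ :=
  C (3 * a - 3 * b + c) * X j ^ 2 + C (2 * b - c) * (X j * psum (Fin n) ℝ 1) +
    C b * psum (Fin n) ℝ 2 + C c * esymm (Fin n) ℝ 2

noncomputable def symCubicPolar : MvPolynomial (Fin n) ℝ :=
  C (6 * a) * psum (Fin n) ℝ 2 + C (4 * b) * esymm (Fin n) ℝ 2

theorem pderiv_symCubic (j : Fin n) :
    pderiv j (symCubic n a b c) = symCubicPartial n a b c j := by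
  have h3 : msym3 n = psum (Fin n) ℝ 3 := rfl
  have h111 : msym111 n = esymm (Fin n) ℝ 3 := rfl
  rw [symCubic, h3, msym21_eq_psum, h111, symCubicPartial, smul_eq_C_mul, smul_eq_C_mul,
    smul_eq_C_mul]
  simp only [map_add, map_sub, map_mul, map_ofNat, pderiv_mul, pderiv_C, pderiv_psum,
    pderiv_esymm_three]
  ring

theorem pderiv_symCubicPartial_self (j : Fin n) :
    pderiv j (symCubicPartial n a b c j) =
      C (6 * a - 2 * b) * X j + C (2 * b) * psum (Fin n) ℝ 1 := by
  simp only [symCubicPartial, map_add, map_sub, map_mul, map_ofNat, pderiv_mul, pderiv_C,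
    pderiv_psum, pderiv_pow, pderiv_X_self, pderiv_ofNat, pderiv_esymm_two]
  ring

theorem polarE2_symCubic : polarE2 n (symCubic n a b c) = symCubicPolar n a b := by
  have h (j : Fin n) : X j * pderiv j (pderiv j (symCubic n a b c)) =
      C (6 * a - 2 * b) * X j ^ 2 + C (2 * b) * psum (Fin n) ℝ 1 * X j := by
    rw [pderiv_symCubic, pderiv_symCubicPartial_self]
    ring
  have hp2 : ∑ j : Fin n, (X j : MvPolynomial (Fin n) ℝ) ^ 2 = psum (Fin n) ℝ 2 := rfl
  simp only [polarE2, h, Finset.sum_add_distrib, ← Finset.mul_sum, hp2, ← psum_one,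
    symCubicPolar, map_sub, map_mul, map_ofNat]
  linear_combination -2 * C b * two_mul_esymm_two (Fin n) ℝ

noncomputable def symCubicComb (w : Fin n → ℝ) (μ : ℝ) : MvPolynomial (Fin n) ℝ :=
  ∑ j, w j • symCubicPartial n a b c j + μ • symCubicPolar n a b

theorem eval_symCubicComb_of_sq_eq_self (x w : Fin n → ℝ) (μ : ℝ)
    (hx : ∀ i, x i ^ 2 = x i) :
    eval x (symCubicComb n a b c w μ) =
      (3 * a - 3 * b + c + (2 * b - c) * ∑ i, x i) * (∑ j, w j * x j) +
        (∑ j, w j) * (b * ∑ i, x i + c * ((∑ i, x i) ^ 2 - ∑ i, x i) / 2) +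
        μ * (6 * a * ∑ i, x i + 2 * b * ((∑ i, x i) ^ 2 - ∑ i, x i)) := by
  have he := two_mul_eval_esymm_two x
  have h (j : Fin n) : eval x (w j • symCubicPartial n a b c j) =
      (3 * a - 3 * b + c + (2 * b - c) * ∑ i, x i) * (w j * x j) +
        w j * (b * ∑ i, x i + c * eval x (esymm (Fin n) ℝ 2)) := by
    simp only [smul_eval, symCubicPartial, eval_add, eval_mul, eval_C, eval_pow, eval_X, psum,
      map_sum, pow_one, hx]
    ring
  simp only [hx] at he
  simp only [symCubicComb, symCubicPolar, map_add, map_sum, h, Finset.sum_add_distrib,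
    ← Finset.mul_sum, ← Finset.sum_mul, smul_eval, eval_mul, eval_C, psum, eval_pow,
    eval_X, hx]
  linear_combination (c * ∑ j, w j + 4 * b * μ) / 2 * he

theorem eval_single_symCubicComb (w : Fin n → ℝ) (μ : ℝ) (k : Fin n) :
    eval (Pi.single k 1) (symCubicComb n a b c w μ) =
      (3 * a - b) * w k + b * ∑ j, w j + 6 * a * μ := by
  have hs : ∑ i, (Pi.single k 1 : Fin n → ℝ) i = 1 := by simp
  have hW : ∑ j, w j * (Pi.single k 1 : Fin n → ℝ) j = w k := by simp [Pi.single_apply]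
  rw [eval_symCubicComb_of_sq_eq_self n a b c _ w μ fun i => by simp [Pi.single_apply], hs, hW]
  ring

theorem eval_single_add_single_symCubicComb (w : Fin n → ℝ) (μ : ℝ) {i k : Fin n}
    (hik : i ≠ k) :
    eval (Pi.single i 1 + Pi.single k 1) (symCubicComb n a b c w μ) =
      (3 * a + b - c) * (w i + w k) + (2 * b + c) * ∑ j, w j + (12 * a + 4 * b) * μ := by
  have hx (j : Fin n) : (Pi.single i 1 + Pi.single k 1 : Fin n → ℝ) j ^ 2 =
      (Pi.single i 1 + Pi.single k 1 : Fin n → ℝ) j := by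
    by_cases hi : j = i <;> by_cases hk : j = k <;> simp_all
  have hs : ∑ j, (Pi.single i 1 + Pi.single k 1 : Fin n → ℝ) j = 2 := by
    simp [Finset.sum_add_distrib, one_add_one_eq_two]
  have hW : ∑ j, w j * (Pi.single i 1 + Pi.single k 1 : Fin n → ℝ) j = w i + w k := by
    simp [Pi.single_apply, mul_add, Finset.sum_add_distrib]
  rw [eval_symCubicComb_of_sq_eq_self n a b c _ w μ hx, hs, hW]
  ring

theorem symCubicComb_const (l μ : ℝ) :
    symCubicComb n a b c (fun _ => l) μ =
      C ((3 * a + ((n : ℝ) - 1) * b) * l + 6 * a * μ) * psum (Fin n) ℝ 2 +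
        C ((4 * b + ((n : ℝ) - 2) * c) * l + 4 * b * μ) * esymm (Fin n) ℝ 2 := by
  have hp1 : ∑ j : Fin n, (X j : MvPolynomial (Fin n) ℝ) = psum (Fin n) ℝ 1 :=
    (psum_one _ _).symm
  have hp2 : ∑ j : Fin n, (X j : MvPolynomial (Fin n) ℝ) ^ 2 = psum (Fin n) ℝ 2 := rfl
  simp only [symCubicComb, symCubicPartial, symCubicPolar, Finset.sum_add_distrib, smul_add,
    ← Finset.mul_sum, ← Finset.sum_mul, hp1, hp2, Finset.sum_const, Finset.card_univ,
    Fintype.card_fin, nsmul_eq_mul, smul_eq_C_mul, ← map_natCast C, map_add, map_sub, map_mul,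
    map_ofNat, map_one]
  linear_combination -(C l * (2 * C b - C c)) * two_mul_esymm_two (Fin n) ℝ

theorem eq_of_symCubic_eval_relations (hn : 3 ≤ n)
    (hprop : ¬ ∃ t : ℝ, a = t ∧ b = 3 * t ∧ c = 6 * t) (w : Fin n → ℝ) (S μ : ℝ)
    (h1 : ∀ k, (3 * a - b) * w k + b * S + 6 * a * μ = 0)
    (h2 : ∀ i k, i ≠ k →
      (3 * a + b - c) * (w i + w k) + (2 * b + c) * S + (12 * a + 4 * b) * μ = 0)
    (i k : Fin n) : w i = w k := by
  by_cases hb : 3 * a - b = 0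
  · have hc : 3 * a + b - c ≠ 0 := fun hc => hprop ⟨a, rfl, by linarith, by linarith⟩
    obtain rfl | hik := eq_or_ne i k
    · rfl
    obtain ⟨m, hmi, hmk⟩ := Fin.exists_ne_and_ne_of_two_lt i k hn
    have := h2 i m hmi.symm
    have := h2 k m hmk.symm
    exact mul_left_cancel₀ hc (by linarith)
  · have := h1 i
    have := h1 k
    exact mul_left_cancel₀ hb (by linarith)

noncomputable def symCubicMatrix : Matrix (Fin 2) (Fin 2) ℝ :=
  !![3 * a + ((n : ℝ) - 1) * b, 6 * a; 4 * b + ((n : ℝ) - 2) * c, 4 * b]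

theorem symCubicMatrix_mulVec_eq_zero_iff (v : Fin 2 → ℝ) :
    (symCubicMatrix n a b c).mulVec v = 0 ↔
      (3 * a + ((n : ℝ) - 1) * b) * v 0 + 6 * a * v 1 = 0 ∧
        (4 * b + ((n : ℝ) - 2) * c) * v 0 + 4 * b * v 1 = 0 := by
  simp [symCubicMatrix, funext_iff, Fin.forall_fin_two, Matrix.vecHead, Matrix.vecTail]

theorem symCubicMatrix_det : (symCubicMatrix n a b c).det =
    4 * ((n : ℝ) - 1) * b ^ 2 - 6 * a * (2 * b + ((n : ℝ) - 2) * c) := by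
  rw [symCubicMatrix, Matrix.det_fin_two_of]
  ring

theorem symCubicMatrix_ne_zero (hn : 3 ≤ n)
    (hprop : ¬ ∃ t : ℝ, a = t ∧ b = 3 * t ∧ c = 6 * t) :
    symCubicMatrix n a b c ≠ 0 := by
  intro hM
  have ha : 6 * a = 0 := by simpa [symCubicMatrix] using congrFun (congrFun hM 0) 1
  have hb : 4 * b = 0 := by simpa [symCubicMatrix] using congrFun (congrFun hM 1) 1
  have hc : 4 * b + ((n : ℝ) - 2) * c = 0 := by
    simpa [symCubicMatrix] using congrFun (congrFun hM 1) 0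
  have hn' : (n : ℝ) - 2 ≠ 0 := by
    have : (3 : ℝ) ≤ n := by exact_mod_cast hn
    linarith
  refine hprop ⟨0, by linarith, by linarith, ?_⟩
  simpa [hn', show b = 0 by linarith] using hc

theorem symCubicComb_eq_zero_iff (hn : 3 ≤ n)
    (hprop : ¬ ∃ t : ℝ, a = t ∧ b = 3 * t ∧ c = 6 * t) (w : Fin n → ℝ) (μ : ℝ) :
    symCubicComb n a b c w μ = 0 ↔
      ∃ l, (∀ j, w j = l) ∧ (symCubicMatrix n a b c).mulVec ![l, μ] = 0 := by
  simp only [symCubicMatrix_mulVec_eq_zero_iff, Matrix.cons_val_zero, Matrix.cons_val_one]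
  constructor
  · intro h
    have h1 (k : Fin n) : (3 * a - b) * w k + b * ∑ j, w j + 6 * a * μ = 0 := by
      rw [← eval_single_symCubicComb, h, map_zero]
    have h2 (i k : Fin n) (hik : i ≠ k) :
        (3 * a + b - c) * (w i + w k) + (2 * b + c) * ∑ j, w j + (12 * a + 4 * b) * μ = 0 := by
      rw [← eval_single_add_single_symCubicComb n a b c w μ hik, h, map_zero]
    let i₀ : Fin n := ⟨0, by omega⟩
    let i₁ : Fin n := ⟨1, by omega⟩
    have hw (j : Fin n) : w j = w i₀ :=
      eq_of_symCubic_eval_relations n a b c hn hprop w _ μ h1 h2 j i₀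
    have hS : ∑ j, w j = n * w i₀ := by simp [hw]
    have e1 := h1 i₀
    have e2 := h2 i₀ i₁ (by simp [i₀, i₁, Fin.ext_iff])
    rw [hS] at e1 e2
    rw [hw i₁] at e2
    exact ⟨w i₀, hw, by linear_combination e1, by linear_combination e2 - 2 * e1⟩
  · rintro ⟨l, hl, hM⟩
    obtain rfl : w = fun _ => l := funext hl
    rw [symCubicComb_const, hM.1, hM.2]
    simp

noncomputable def symCubicFamily : Fin n ⊕ Unit → MvPolynomial (Fin n) ℝ :=
  Sum.elim (symCubicPartial n a b c) fun _ => symCubicPolar n a b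

theorem linearCombination_symCubicFamily (x : Fin n ⊕ Unit → ℝ) :
    Fintype.linearCombination ℝ (symCubicFamily n a b c) x =
      symCubicComb n a b c (fun j => x (Sum.inl j)) (x (Sum.inr ())) := by
  simp [Fintype.linearCombination_apply, symCubicFamily, symCubicComb]

theorem exceptionSpan_symCubic :
    exceptionSpan n (symCubic n a b c) =
      LinearMap.range (Fintype.linearCombination ℝ (symCubicFamily n a b c)) := by
  rw [Fintype.range_linearCombination, symCubicFamily, Set.Sum.elim_range, Set.range_const,
    exceptionSpan, polarE2_symCubic, funext (pderiv_symCubic n a b c)]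

noncomputable def spreadPair : (Fin 2 → ℝ) →ₗ[ℝ] (Fin n ⊕ Unit → ℝ) :=
  LinearMap.pi (Sum.elim (fun _ => LinearMap.proj 0) fun _ => LinearMap.proj 1)

theorem spreadPair_injective (hn : 0 < n) : Function.Injective (spreadPair n) := by
  intro v v' h
  ext i
  fin_cases i
  · exact congrFun h (Sum.inl ⟨0, hn⟩)
  · exact congrFun h (Sum.inr ())

theorem ker_linearCombination_symCubicFamily (hn : 3 ≤ n)
    (hprop : ¬ ∃ t : ℝ, a = t ∧ b = 3 * t ∧ c = 6 * t) :
    LinearMap.ker (Fintype.linearCombination ℝ (symCubicFamily n a b c)) =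
      (LinearMap.ker (symCubicMatrix n a b c).mulVecLin).map (spreadPair n) := by
  ext x
  rw [LinearMap.mem_ker, linearCombination_symCubicFamily,
    symCubicComb_eq_zero_iff n a b c hn hprop]
  constructor
  · rintro ⟨l, hl, hM⟩
    refine ⟨![l, x (Sum.inr ())], hM, ?_⟩
    ext (j | u)
    · exact (hl j).symm
    · rfl
  · rintro ⟨v, hv, rfl⟩
    rw [SetLike.mem_coe, LinearMap.mem_ker, Matrix.mulVecLin_apply] at hv
    have hv' : ![v 0, spreadPair n v (Sum.inr ())] = v := by
      ext i
      fin_cases i <;> rfl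
    exact ⟨v 0, fun _ => rfl, by rwa [hv']⟩

end SymmetricCubic

/-- For `n ≥ 3` and `f = a·m_3 + b·m_{21} + c·m_{111}` with `(a,b,c)` not
proportional to `(1,3,6)`, `f` is an `n`-exception iff `6a(2b+(n−2)c) = 4(n−1)b²`. -/
theorem isException_iff_degree_three (n : ℕ) (hn : 3 ≤ n) (a b c : ℝ)
    (hprop : ¬ ∃ t : ℝ, a = t ∧ b = 3 * t ∧ c = 6 * t) :
    IsException n (a • msym3 n + b • msym21 n + c • msym111 n) ↔
      6 * a * (2 * b + ((n : ℝ) - 2) * c) = 4 * ((n : ℝ) - 1) * b ^ 2 := by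
  have hrank :=
    (Fintype.linearCombination ℝ (symCubicFamily n a b c)).finrank_range_add_finrank_ker
  rw [← exceptionSpan_symCubic, ker_linearCombination_symCubicFamily n a b c hn hprop,
    ← (Submodule.equivMapOfInjective _ (spreadPair_injective n (by omega)) _).finrank_eq,
    Module.finrank_fintype_fun_eq_card, Fintype.card_sum, Fintype.card_fin,
    Fintype.card_unit] at hrank
  change Module.finrank ℝ (exceptionSpan n (symCubic n a b c)) = n ↔ _
  rw [show Module.finrank ℝ (exceptionSpan n (symCubic n a b c)) = n ↔
      Module.finrank ℝ (LinearMap.ker (symCubicMatrix n a b c).mulVecLin) = 1 by omega,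
    Matrix.finrank_ker_mulVecLin_fin_two_eq_one_iff, symCubicMatrix_det]
  simp only [symCubicMatrix_ne_zero n a b c hn hprop, ne_eq, not_false_eq_true, and_true,
    sub_eq_zero]
  exact eq_comm
end

section
/- Let f be a homogeneous symmetric polynomial of degree 3 in R[x_1,...,x_n] which is not a scalar multiple of p_1³ = (x_1+...+x_n)³. Then the real span of ∂f/∂x_1, ..., ∂f/∂x_n together with E^{(2)}(f) = Σ_j x_j ∂²f/∂x_j² has dimension at least n. -/
open MvPolynomial

/-!
Write `f = a m₃ + b m₂₁ + c m₁₁₁`. If `b ≠ 3a`, the coefficients of the squares `xᵢ²`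
already give `n` independent directions: they send `∂ⱼf` to `b 𝟙 + (3a - b) eⱼ` and
`E^{(2)}(f)` to `6a 𝟙`, and these vectors span `ℝⁿ`. If `b = 3a`, then `c ≠ 6a` and
`n ≥ 3`, since otherwise `f = a p₁³`; comparing the coefficients of `xᵢ²` and `xᵢxₖ` then
shows that `∂₁f, …, ∂ₙf` are linearly independent.
-/

open Finsupp

theorem Finsupp.exists_eq_single_add_single_add_single {σ : Type*} {d : σ →₀ ℕ}
    (hd : d.degree = 3) : ∃ x y z, d = single x 1 + single y 1 + single z 1 := by
  classical
  have hcard : Multiset.card (toMultiset d) = 3 := by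
    rw [card_toMultiset, ← hd, degree]
    rfl
  obtain ⟨x, y, z, hxyz⟩ := Multiset.card_eq_three.mp hcard
  refine ⟨x, y, z, Multiset.toFinsupp.symm.injective ?_⟩
  simp [toMultiset_add, toMultiset_single, hxyz, Multiset.insert_eq_cons,
    ← Multiset.singleton_add, add_assoc]

theorem injective_triple_of_ne {α : Type*} {x y z : α} (hxy : x ≠ y) (hxz : x ≠ z)
    (hyz : y ≠ z) : Function.Injective ![x, y, z] := by
  intro s t
  fin_cases s <;> fin_cases t <;> simp_all [eq_comm]

namespace MvPolynomial

variable {R σ : Type*} [CommSemiring R]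

theorem IsHomogeneous.ext_three {f g : MvPolynomial σ R} (hf : f.IsHomogeneous 3)
    (hg : g.IsHomogeneous 3) (h3 : ∀ i, coeff (single i 3) f = coeff (single i 3) g)
    (h21 : ∀ {i k}, i ≠ k →
      coeff (single i 2 + single k 1) f = coeff (single i 2 + single k 1) g)
    (h111 : ∀ {i j k}, i ≠ j → i ≠ k → j ≠ k →
      coeff (single i 1 + single j 1 + single k 1) f =
        coeff (single i 1 + single j 1 + single k 1) g) :
    f = g := by
  ext d
  by_cases hd : d.degree = 3
  · obtain ⟨x, y, z, rfl⟩ := exists_eq_single_add_single_add_single hd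
    rcases eq_or_ne x y with rfl | hxy
    · rcases eq_or_ne x z with rfl | hxz
      · simpa only [← single_add] using h3 x
      · rw [← single_add]
        exact h21 hxz
    · rcases eq_or_ne x z with rfl | hxz
      · rw [add_right_comm, ← single_add]
        exact h21 hxy
      · rcases eq_or_ne y z with rfl | hyz
        · rw [add_assoc, ← single_add, add_comm]
          exact h21 hxy.symm
        · exact h111 hxy hxz hyz
  · rw [hf.coeff_eq_zero hd, hg.coeff_eq_zero hd]

theorem IsSymmetric.coeff_sum_single_eq {ι : Type*} [Fintype ι] {f : MvPolynomial σ R}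
    (hf : f.IsSymmetric) (m : ι → ℕ) {v w : ι → σ} (hv : v.Injective) (hw : w.Injective) :
    coeff (∑ t, single (v t) (m t)) f = coeff (∑ t, single (w t) (m t)) f := by
  obtain ⟨e, he⟩ := Equiv.Perm.exists_extending_pair v w hv hw
  rw [← coeff_rename_mapDomain e e.injective, hf e, mapDomain_finsetSum]
  simp only [mapDomain_single, he]

theorem IsSymmetric.coeff_single_eq {f : MvPolynomial σ R} (hf : f.IsSymmetric) (m : ℕ)
    (i j : σ) : coeff (single i m) f = coeff (single j m) f := by
  simpa using hf.coeff_sum_single_eq (fun _ : Unit => m) (v := fun _ => i) (w := fun _ => j)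
    (fun _ _ _ => rfl) (fun _ _ _ => rfl)

theorem IsSymmetric.coeff_single_add_single_eq {f : MvPolynomial σ R} (hf : f.IsSymmetric)
    (m m' : ℕ) {i k i' k' : σ} (h : i ≠ k) (h' : i' ≠ k') :
    coeff (single i m + single k m') f = coeff (single i' m + single k' m') f := by
  simpa using hf.coeff_sum_single_eq ![m, m'] (injective_pair_iff_ne.mpr h)
    (injective_pair_iff_ne.mpr h')

theorem IsSymmetric.coeff_single_add_single_add_single_eq {f : MvPolynomial σ R}
    (hf : f.IsSymmetric) (m m' m'' : ℕ) {i j k i' j' k' : σ}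
    (hij : i ≠ j) (hik : i ≠ k) (hjk : j ≠ k)
    (hij' : i' ≠ j') (hik' : i' ≠ k') (hjk' : j' ≠ k') :
    coeff (single i m + single j m' + single k m'') f =
      coeff (single i' m + single j' m' + single k' m'') f := by
  simpa [Fin.sum_univ_three, add_assoc] using hf.coeff_sum_single_eq ![m, m', m'']
    (injective_triple_of_ne hij hik hjk) (injective_triple_of_ne hij' hik' hjk')

section SumXPow

variable [Fintype σ]

theorem coeff_single_sum_X_pow (i : σ) (m : ℕ) :
    coeff (single i m) ((∑ j, X j : MvPolynomial σ R) ^ m) = 1 := by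
  rw [coeff_sum_X_pow_of_fintype, multinomial_eq_of_support_subset support_single_subset]
  simp

theorem coeff_single_add_single_sum_X_pow_three {i k : σ} (h : i ≠ k) :
    coeff (single i 2 + single k 1) ((∑ j, X j : MvPolynomial σ R) ^ 3) = 3 := by
  classical
  rw [coeff_sum_X_pow_of_fintype, multinomial_eq_of_support_subset (s := {i, k})]
  · simp [Nat.multinomial_insert, h, sum_add_index']
  · exact Finsupp.support_add.trans
      (Finset.union_subset_union support_single_subset support_single_subset)

theorem coeff_single_add_single_add_single_sum_X_pow_three {i j k : σ} (hij : i ≠ j)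
    (hik : i ≠ k) (hjk : j ≠ k) :
    coeff (single i 1 + single j 1 + single k 1) ((∑ j, X j : MvPolynomial σ R) ^ 3) = 6 := by
  classical
  rw [coeff_sum_X_pow_of_fintype, multinomial_eq_of_support_subset (s := {i, j, k})]
  · simp [hij, hik, hjk, sum_add_index']
  · intro x hx
    simp at hx ⊢
    grind

theorem isHomogeneous_sum_X : (∑ j, X j : MvPolynomial σ R).IsHomogeneous 1 :=
  IsHomogeneous.sum _ _ _ fun j _ => isHomogeneous_X R j

theorem eq_smul_sum_X_pow_three {f : MvPolynomial σ R} (hf : f.IsHomogeneous 3) {a : R}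
    (h3 : ∀ i, coeff (single i 3) f = a)
    (h21 : ∀ {i k}, i ≠ k → coeff (single i 2 + single k 1) f = 3 * a)
    (h111 : ∀ {i j k}, i ≠ j → i ≠ k → j ≠ k →
      coeff (single i 1 + single j 1 + single k 1) f = 6 * a) :
    f = a • (∑ j, X j) ^ 3 := by
  refine hf.ext_three ?_ (fun i => ?_) (fun hik => ?_) (fun hij hik hjk => ?_)
  · rw [smul_eq_C_mul]
    exact (isHomogeneous_sum_X.pow 3).C_mul a
  all_goals rw [coeff_smul, smul_eq_mul]
  · rw [h3, coeff_single_sum_X_pow, mul_one]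
  · rw [h21 hik, coeff_single_add_single_sum_X_pow_three hik, mul_comm]
  · rw [h111 hij hik hjk, coeff_single_add_single_add_single_sum_X_pow_three hij hik hjk,
      mul_comm]

end SumXPow

section Pderiv

variable [DecidableEq σ] {f : MvPolynomial σ R}

theorem coeff_single_two_pderiv {a b : R} (h3 : ∀ i, coeff (single i 3) f = a)
    (h21 : ∀ {i k}, i ≠ k → coeff (single i 2 + single k 1) f = b) (i j : σ) :
    coeff (single i 2) (pderiv j f) = if i = j then 3 * a else b := by
  rw [coeff_pderiv]
  split_ifs with hij
  · subst hij
    rw [← single_add, h3, single_eq_same]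
    norm_num [mul_comm]
  · simp [h21 hij, hij]

theorem coeff_single_one_add_single_one_pderiv {b c : R}
    (h21 : ∀ {i k}, i ≠ k → coeff (single i 2 + single k 1) f = b)
    (h111 : ∀ {i j k}, i ≠ j → i ≠ k → j ≠ k →
      coeff (single i 1 + single j 1 + single k 1) f = c)
    {i k : σ} (hik : i ≠ k) (j : σ) :
    coeff (single i 1 + single k 1) (pderiv j f) = if j = i ∨ j = k then 2 * b else c := by
  rw [coeff_pderiv]
  rcases eq_or_ne j i with rfl | hji
  · rw [add_right_comm, ← single_add, h21 hik]
    simp [hik]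
    norm_num [mul_comm]
  rcases eq_or_ne j k with rfl | hjk
  · rw [add_assoc, ← single_add, add_comm, h21 hik.symm]
    simp [hik]
    norm_num [mul_comm]
  · simp [h111 hik hji.symm hjk.symm, hji, hjk]

end Pderiv

end MvPolynomial

theorem Fintype.sum_ite_eq_sub_add_card_mul {K ι : Type*} [Field K] [Fintype ι] [DecidableEq ι]
    (p q : K) (i : ι) : ∑ j, (if i = j then p else q) = p - q + Fintype.card ι * q := by
  have h : ∀ j, (if i = j then p else q) = q + if i = j then p - q else 0 := by
    intro j
    split_ifs <;> ring
  simp only [h, Finset.sum_add_distrib, Finset.sum_ite_eq, Finset.mem_univ, if_true,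
    Finset.sum_const, Finset.card_univ, nsmul_eq_mul]
  ring

theorem Fintype.sum_mul_ite_eq_or_eq {K ι : Type*} [Field K] [Fintype ι] [DecidableEq ι]
    (μ : ι → K) {i k : ι} (hik : i ≠ k) (p q : K) :
    ∑ j, μ j * (if j = i ∨ j = k then p else q) =
      (∑ j, μ j) * q + (μ i + μ k) * (p - q) := by
  have h : ∀ j, μ j * (if j = i ∨ j = k then p else q) =
      μ j * q + (p - q) * ((if j = i then μ j else 0) + if j = k then μ j else 0) := by
    intro j
    by_cases hji : j = i <;> by_cases hjk : j = k <;> simp_all <;> ring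
  simp only [h, Finset.sum_add_distrib, ← Finset.mul_sum, ← Finset.sum_mul, Finset.sum_ite_eq',
    Finset.mem_univ, if_true]
  ring

theorem Submodule.eq_top_of_one_mem_of_ite_mem {K ι : Type*} [Field K] [Fintype ι]
    [DecidableEq ι] {W : Submodule K (ι → K)} {p q : K} (hpq : p ≠ q)
    (h1 : (1 : ι → K) ∈ W)
    (hu : ∀ j, (fun i => if i = j then p else q) ∈ W) : W = ⊤ := by
  rw [eq_top_iff, ← (Pi.basisFun K ι).span_eq, Submodule.span_le]
  rintro _ ⟨j, rfl⟩
  have hbasis :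
      Pi.basisFun K ι j = (p - q)⁻¹ • ((fun i => if i = j then p else q) - q • 1) := by
    ext i
    rcases eq_or_ne i j with rfl | hij
    · simp [sub_ne_zero.mpr hpq]
    · simp [hij]
  rw [hbasis]
  exact W.smul_mem _ (W.sub_mem (hu j) (W.smul_mem q h1))

section ExceptionSpan

open MvPolynomial

variable {n : ℕ}

theorem coeff_single_two_polarE2 {f : MvPolynomial (Fin n) ℝ} {a : ℝ}
    (h3 : ∀ i, coeff (single i 3) f = a) (i : Fin n) :
    coeff (single i 2) (polarE2 n f) = 6 * a := by
  rw [polarE2, coeff_sum, Finset.sum_eq_single i]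
  · rw [coeff_X_mul', if_pos (by simp), ← single_tsub, coeff_pderiv, ← single_add,
      coeff_pderiv, ← single_add, h3]
    norm_num
    ring
  · intro j _ hji
    simp [coeff_X_mul', hji]
  · simp

instance (f : MvPolynomial (Fin n) ℝ) : FiniteDimensional ℝ (exceptionSpan n f) :=
  FiniteDimensional.span_of_finite ℝ ((Set.finite_range _).union (Set.finite_singleton _))

theorem pderiv_mem_exceptionSpan (f : MvPolynomial (Fin n) ℝ) (j : Fin n) :
    pderiv j f ∈ exceptionSpan n f :=
  Submodule.subset_span (Or.inl ⟨j, rfl⟩)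

theorem polarE2_mem_exceptionSpan (f : MvPolynomial (Fin n) ℝ) :
    polarE2 n f ∈ exceptionSpan n f :=
  Submodule.subset_span (Or.inr rfl)

theorem le_finrank_exceptionSpan_of_ne (hn : 2 ≤ n) {f : MvPolynomial (Fin n) ℝ} {a b : ℝ}
    (h3 : ∀ i, coeff (single i 3) f = a)
    (h21 : ∀ {i k}, i ≠ k → coeff (single i 2 + single k 1) f = b) (hab : b ≠ 3 * a) :
    n ≤ Module.finrank ℝ (exceptionSpan n f) := by
  let φ : MvPolynomial (Fin n) ℝ →ₗ[ℝ] Fin n → ℝ :=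
    LinearMap.pi fun i => lcoeff ℝ (single i 2)
  set W := (exceptionSpan n f).map φ
  have hderiv : ∀ j, (fun i => if i = j then 3 * a else b) ∈ W := fun j => by
    convert Submodule.mem_map_of_mem (f := φ) (pderiv_mem_exceptionSpan f j)
    exact (coeff_single_two_pderiv h3 h21 _ j).symm
  have hone : (1 : Fin n → ℝ) ∈ W := by
    by_cases ha : a = 0
    · have hsum : ((n - 1) * b) • (1 : Fin n → ℝ) ∈ W := by
        convert W.sum_mem (t := Finset.univ) fun j _ => hderiv j using 1
        ext i
        simp [Finset.sum_apply, Fintype.sum_ite_eq_sub_add_card_mul, ha]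
        ring
      refine (W.smul_mem_iff (mul_ne_zero ?_ (by simpa [ha] using hab))).mp hsum
      have : (2 : ℝ) ≤ n := by exact_mod_cast hn
      linarith
    · have hE2 : (6 * a) • (1 : Fin n → ℝ) ∈ W := by
        convert Submodule.mem_map_of_mem (f := φ) (polarE2_mem_exceptionSpan f)
        ext i
        simp [φ, coeff_single_two_polarE2 h3]
      exact (W.smul_mem_iff (by simpa using ha)).mp hE2
  have htop : W = ⊤ := Submodule.eq_top_of_one_mem_of_ite_mem (Ne.symm hab) hone hderiv
  calc n = Module.finrank ℝ (⊤ : Submodule ℝ (Fin n → ℝ)) := by simp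
    _ = Module.finrank ℝ W := by rw [htop]
    _ ≤ Module.finrank ℝ (exceptionSpan n f) := Submodule.finrank_map_le φ _

theorem linearIndependent_pderiv (hn : 2 < n) {f : MvPolynomial (Fin n) ℝ} {a c : ℝ}
    (h3 : ∀ i, coeff (single i 3) f = a)
    (h21 : ∀ {i k}, i ≠ k → coeff (single i 2 + single k 1) f = 3 * a)
    (h111 : ∀ {i j k}, i ≠ j → i ≠ k → j ≠ k →
      coeff (single i 1 + single j 1 + single k 1) f = c)
    (hca : c ≠ 6 * a) :
    LinearIndependent ℝ (fun j => pderiv j f) := by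
  rw [Fintype.linearIndependent_iff]
  intro μ hμ
  have hcoeff : ∀ d, ∑ j, μ j * coeff d (pderiv j f) = 0 := fun d => by
    simpa [coeff_sum] using congr_arg (coeff d) hμ
  set S := ∑ j, μ j
  let i₀ : Fin n := ⟨0, by omega⟩
  let i₁ : Fin n := ⟨1, by omega⟩
  have hsq : S * (3 * a) = 0 := by
    have := hcoeff (single i₀ 2)
    simpa only [coeff_single_two_pderiv h3 h21, ite_self, ← Finset.sum_mul] using this
  have hpair : ∀ i k, i ≠ k → S * c + (μ i + μ k) * (6 * a - c) = 0 := by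
    intro i k hik
    have := hcoeff (single i 1 + single k 1)
    simp only [coeff_single_one_add_single_one_pderiv h21 h111 hik,
      Fintype.sum_mul_ite_eq_or_eq μ hik] at this
    linear_combination this
  have hconst : ∀ i, μ i = μ i₀ := fun i => by
    obtain ⟨l, hli, hl₀⟩ := Fin.exists_ne_and_ne_of_two_lt i i₀ hn
    have : (μ i - μ i₀) * (6 * a - c) = 0 := by
      linear_combination hpair i l hli.symm - hpair i₀ l hl₀.symm
    exact sub_eq_zero.mp ((mul_eq_zero.mp this).resolve_right (sub_ne_zero.mpr hca.symm))
  have hS : S = n * μ i₀ := by simp [S, hconst]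
  have hm : μ i₀ = 0 := by
    by_contra hm
    have hn0 : (n : ℝ) ≠ 0 := by positivity
    have ha : a = 0 := by simpa [hS, hm, hn0] using hsq
    have h := hpair i₀ i₁ (by simp [i₀, i₁, Fin.ext_iff])
    rw [hS, hconst i₁, ha] at h
    have : μ i₀ * c * (n - 2) = 0 := by linear_combination h
    have hn2 : (n : ℝ) - 2 ≠ 0 := by
      have : (2 : ℝ) < n := by exact_mod_cast hn
      linarith
    exact hca (by simpa [ha, hm, hn2] using this)
  intro i
  rw [hconst i, hm]

theorem le_finrank_exceptionSpan_of_linearIndependent {f : MvPolynomial (Fin n) ℝ}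
    (hli : LinearIndependent ℝ (fun j => pderiv j f)) :
    n ≤ Module.finrank ℝ (exceptionSpan n f) :=
  calc n = Module.finrank ℝ (Submodule.span ℝ (Set.range fun j => pderiv j f)) := by
        rw [finrank_span_eq_card hli, Fintype.card_fin]
    _ ≤ Module.finrank ℝ (exceptionSpan n f) :=
        Submodule.finrank_mono <| Submodule.span_le.mpr <|
          Set.range_subset_iff.mpr (pderiv_mem_exceptionSpan f)

end ExceptionSpan

/-- If `f` is homogeneous symmetric of degree 3 in `n ≥ 2` variables and not a
scalar multiple of `p_1³ = (x_1 + ⋯ + x_n)³`, then the span of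
`∂f/∂x_1, …, ∂f/∂x_n, E^{(2)}(f)` has dimension at least `n`. -/
theorem dim_ge_of_not_multiple_p1_cubed (n : ℕ) (hn : 2 ≤ n)
    (f : MvPolynomial (Fin n) ℝ) (hhom : f.IsHomogeneous 3)
    (hsym : ∀ σ : Equiv.Perm (Fin n), rename σ f = f)
    (hnm : ∀ t : ℝ, f ≠ t • (∑ j : Fin n, X j) ^ 3) :
    n ≤ Module.finrank ℝ (exceptionSpan n f) := by
  let i₀ : Fin n := ⟨0, by omega⟩
  let i₁ : Fin n := ⟨1, by omega⟩
  set a := coeff (single i₀ 3) f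
  set b := coeff (single i₀ 2 + single i₁ 1) f
  have h3 : ∀ i, coeff (single i 3) f = a := fun i => IsSymmetric.coeff_single_eq hsym 3 i i₀
  have h21 : ∀ {i k}, i ≠ k → coeff (single i 2 + single k 1) f = b := fun hik =>
    IsSymmetric.coeff_single_add_single_eq hsym 2 1 hik (by simp [i₀, i₁, Fin.ext_iff])
  rcases ne_or_eq b (3 * a) with hab | hab
  · exact le_finrank_exceptionSpan_of_ne hn h3 h21 hab
  rw [hab] at h21
  obtain ⟨i, j, k, hij, hik, hjk, hc⟩ : ∃ i j k, i ≠ j ∧ i ≠ k ∧ j ≠ k ∧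
      coeff (single i 1 + single j 1 + single k 1) f ≠ 6 * a := by
    by_contra! h
    exact hnm a (eq_smul_sum_X_pow_three hhom h3 h21 (h _ _ _))
  have hn3 : 2 < n := by simpa using Fintype.two_lt_card_iff.mpr ⟨i, j, k, hij, hik, hjk⟩
  have h111 : ∀ {i' j' k'}, i' ≠ j' → i' ≠ k' → j' ≠ k' →
      coeff (single i' 1 + single j' 1 + single k' 1) f =
        coeff (single i 1 + single j 1 + single k 1) f := fun hij' hik' hjk' =>
    IsSymmetric.coeff_single_add_single_add_single_eq hsym 1 1 1 hij' hik' hjk' hij hik hjk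
  exact le_finrank_exceptionSpan_of_linearIndependent
    (linearIndependent_pderiv hn3 h3 h21 h111 hc)
end

section
/- For the polynomial f = p_2·p_1 = (Σ_j x_j²)(Σ_j x_j) of degree 3 in n variables, with n = 4: E^{(2)}(f) lies in the span of the first-order partial derivatives ∂f/∂x_1,...,∂f/∂x_n if and only if the exception equation 6a(2b+(n−2)c) = 4(n−1)b² holds for its monomial coordinates [a:b:c] = [1:1:0]; in particular p_{21} = p_2 p_1 is a 4-exception and E^{(2)}(p_{21}) = Σ_{j=1}^4 ∂p_{21}/∂x_j. -/
open MvPolynomial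

lemma aux_ptwo (j : Fin 4) : pderiv j (2 : MvPolynomial (Fin 4) ℝ) = 0 := by
  rw [show (2 : MvPolynomial (Fin 4) ℝ) = C 2 from (map_ofNat C 2).symm, pderiv_C]

/-- First partial derivatives of `p_2 p_1`. -/
lemma aux_hd (j : Fin 4) :
    pderiv j ((∑ i : Fin 4, X i ^ 2) * (∑ i : Fin 4, X i) : MvPolynomial (Fin 4) ℝ)
    = 2 * X j * (∑ i : Fin 4, X i) + (∑ i : Fin 4, X i ^ 2) := by
  simp only [pderiv_mul, map_sum, pderiv_pow, pderiv_X, Fin.sum_univ_four]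
  fin_cases j <;> simp [Pi.single_apply]

/-- `E^{(2)}(p_2 p_1) = Σ_j ∂(p_2 p_1)/∂x_j`. -/
lemma aux_hE : polarE2 4 ((∑ i : Fin 4, X i ^ 2) * (∑ i : Fin 4, X i) : MvPolynomial (Fin 4) ℝ)
    = ∑ j : Fin 4,
        pderiv j ((∑ i : Fin 4, X i ^ 2) * (∑ i : Fin 4, X i) : MvPolynomial (Fin 4) ℝ) := by
  simp only [polarE2, aux_hd]
  simp only [map_add, pderiv_mul, map_sum, pderiv_pow, pderiv_X, aux_ptwo, Fin.sum_univ_four]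
  simp +decide [Pi.single_apply]
  ring

/-- The partial derivatives of `p_2 p_1` are linearly independent. -/
lemma aux_li : LinearIndependent ℝ (fun j : Fin 4 =>
    pderiv j ((∑ i : Fin 4, X i ^ 2) * (∑ i : Fin 4, X i) : MvPolynomial (Fin 4) ℝ)) := by
  rw [Fintype.linearIndependent_iff]
  intro g h
  simp only [aux_hd, smul_eq_C_mul, Fin.sum_univ_four] at h
  have ev : ∀ k : Fin 4,
      g 0 * (2 * (if (0:Fin 4) = k then (1:ℝ) else 0) + 1)
      + g 1 * (2 * (if (1:Fin 4) = k then (1:ℝ) else 0) + 1)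
      + g 2 * (2 * (if (2:Fin 4) = k then (1:ℝ) else 0) + 1)
      + g 3 * (2 * (if (3:Fin 4) = k then (1:ℝ) else 0) + 1) = 0 := by
    intro k
    have := congrArg (eval (fun i => if i = k then (1:ℝ) else 0)) h
    simp only [map_add, map_mul, eval_C, eval_X, map_pow, map_ofNat, map_zero,
      Fin.sum_univ_four] at this
    fin_cases k <;> simp +decide at this ⊢ <;> linarith
  have e0 := ev 0; have e1 := ev 1; have e2 := ev 2; have e3 := ev 3
  simp +decide at e0 e1 e2 e3
  have h0 : g 0 = 0 := by linarith
  have h1 : g 1 = 0 := by linarith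
  have h2 : g 2 = 0 := by linarith
  have h3 : g 3 = 0 := by linarith
  intro j; fin_cases j
  exacts [h0, h1, h2, h3]

/-- For `f = p_2 p_1` in 4 variables (monomial coordinates `a = 1, b = 1, c = 0`):
`E^{(2)}(f)` lies in the span of the first-order partials iff the exception
equation `6a(2b+(n−2)c) = 4(n−1)b²` holds for `n = 4`; in particular
`p_{21}` is a `4`-exception and `E^{(2)}(p_{21}) = Σ_j ∂p_{21}/∂x_j`. -/
theorem p21_four_exception :
    let f : MvPolynomial (Fin 4) ℝ := (∑ j : Fin 4, X j ^ 2) * (∑ j : Fin 4, X j)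
    (polarE2 4 f ∈ Submodule.span ℝ (Set.range (fun j : Fin 4 => pderiv j f)) ↔
        6 * 1 * (2 * 1 + ((4 : ℝ) - 2) * 0) = 4 * ((4 : ℝ) - 1) * 1 ^ 2) ∧
      IsException 4 f ∧ polarE2 4 f = ∑ j : Fin 4, pderiv j f := by
  intro f
  have hmem : polarE2 4 f ∈ Submodule.span ℝ (Set.range (fun j : Fin 4 => pderiv j f)) := by
    rw [aux_hE]
    exact Submodule.sum_mem _ fun j _ => Submodule.subset_span ⟨j, rfl⟩
  have hspan : exceptionSpan 4 f
      = Submodule.span ℝ (Set.range (fun j : Fin 4 => pderiv j f)) := by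
    rw [exceptionSpan, Submodule.span_union, sup_eq_left]
    rwa [Submodule.span_singleton_le_iff_mem]
  refine ⟨⟨fun _ => by norm_num, fun _ => hmem⟩, ?_, aux_hE⟩
  rw [IsException, hspan, finrank_span_eq_card aux_li, Fintype.card_fin]
end

section
/- For n ≥ 3, h_3 = Σ_{i≤j≤k} x_i x_j x_k is not an n-exception: the span of its n first-order partial derivatives together with E^{(2)}(h_3) has dimension n+1. -/
open MvPolynomial

/-- The complete homogeneous symmetric polynomial `h_3 = Σ_{i ≤ j ≤ k} x_i x_j x_k`. -/
noncomputable def hsym3 (n : ℕ) : MvPolynomial (Fin n) ℝ :=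
  ∑ s ∈ Finset.univ.sym 3, ((Sym.toMultiset s).map X).prod

/-! For a monomial `x^m` of degree 2, the coefficient of `x^m` in `∂_j h_3` is `m_j + 1`, and,
since `x_j ∂_j` multiplies `x^m` by `m_j`, its coefficient in `E^{(2)}(h_3)` is
`Σ_j m_j (m_j + 1)`. Reading a relation `Σ_j c_j ∂_j h_3 + d E^{(2)}(h_3) = 0` off at `x_i²` and
at `x_i x_k` (`i ≠ k`) gives `S + 2 c_i + 6 d = 0` and `S + c_i + c_k + 4 d = 0` with
`S = Σ_j c_j`; hence `d = 0`, all `c_i` equal `-S / 2`, and then `S = 0`. -/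

open Finsupp

section

variable {σ R : Type*} [CommSemiring R]

theorem coeff_X_mul_pderiv (i : σ) (p : MvPolynomial σ R) (m : σ →₀ ℕ) :
    coeff m (X i * pderiv i p) = m i * coeff m p := by
  classical
  induction p using MvPolynomial.induction_on' with
  | monomial s a =>
    rw [X_mul_pderiv_monomial, coeff_smul, coeff_monomial]
    split_ifs with h
    · rw [h, nsmul_eq_mul]
    · simp
  | add p q hp hq => simp only [map_add, mul_add, coeff_add, hp, hq]

variable [DecidableEq σ]

theorem prod_map_X_eq_monomial (s : Multiset σ) :
    (s.map X).prod = monomial (Multiset.toFinsupp s) (1 : R) := by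
  induction s using Multiset.induction_on with
  | empty => simp
  | cons a s ih =>
    simp [ih, X, monomial_mul, ← Multiset.singleton_add, Multiset.toFinsupp_add]

variable [Fintype σ]

theorem coeff_hsymm (k : ℕ) (m : σ →₀ ℕ) :
    coeff m (hsymm σ R k) = if m.degree = k then 1 else 0 := by
  simp only [hsymm, prod_map_X_eq_monomial, coeff_sum, coeff_monomial]
  split_ifs with hm
  · have hcard : Multiset.card (toMultiset m) = k := by
      rw [card_toMultiset, ← hm, degree_apply]; rfl
    rw [Fintype.sum_eq_single ⟨toMultiset m, hcard⟩ fun s hs => if_neg ?_]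
    · simp
    · contrapose! hs
      exact Sym.coe_injective (by simp [← hs])
  · refine Finset.sum_eq_zero fun s _ => if_neg ?_
    rintro rfl
    apply hm
    simp [degree_apply, Multiset.toFinsupp_support]

theorem coeff_pderiv_hsymm (i : σ) (k : ℕ) (m : σ →₀ ℕ) :
    coeff m (pderiv i (hsymm σ R (k + 1))) = if m.degree = k then (m i + 1 : R) else 0 := by
  rw [coeff_pderiv, coeff_hsymm, map_add, degree_single]
  simp only [add_left_inj, ite_mul, one_mul, zero_mul]

end

theorem hsym3_eq_hsymm (n : ℕ) : hsym3 n = hsymm (Fin n) ℝ 3 := by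
  rw [hsym3, Finset.sym_univ]
  rfl

theorem coeff_polarE2 {n : ℕ} (f : MvPolynomial (Fin n) ℝ) (m : Fin n →₀ ℕ) :
    coeff m (polarE2 n f) = ∑ j, m j * coeff m (pderiv j f) := by
  simp only [polarE2, coeff_sum, coeff_X_mul_pderiv]

theorem coeff_pderiv_hsym3 {n : ℕ} (j : Fin n) {m : Fin n →₀ ℕ} (hm : m.degree = 2) :
    coeff m (pderiv j (hsym3 n)) = m j + 1 := by
  rw [hsym3_eq_hsymm, coeff_pderiv_hsymm, if_pos hm]

theorem coeff_polarE2_hsym3 {n : ℕ} {m : Fin n →₀ ℕ} (hm : m.degree = 2) :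
    coeff m (polarE2 n (hsym3 n)) = ∑ j, (m j : ℝ) * (m j + 1) := by
  simp only [coeff_polarE2, coeff_pderiv_hsym3 _ hm]

theorem eq_zero_of_forall_degree_eq_two {σ : Type*} [Fintype σ] [DecidableEq σ]
    (hσ : 1 < Fintype.card σ) {c : σ → ℝ} {d : ℝ}
    (h : ∀ m : σ →₀ ℕ, m.degree = 2 →
      ∑ j, c j * (m j + 1) + d * ∑ j, (m j : ℝ) * (m j + 1) = 0) :
    c = 0 ∧ d = 0 := by
  have hsquare (i : σ) : ∑ j, c j + 2 * c i + 6 * d = 0 := by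
    have hi := h (single i 2) (degree_single i 2)
    simp only [single_apply, Nat.cast_ite, Nat.cast_ofNat, CharP.cast_eq_zero, mul_add, mul_ite,
      mul_zero, mul_one, Finset.sum_add_distrib, Finset.sum_ite_eq, Finset.mem_univ, ↓reduceIte,
      ite_mul, zero_mul] at hi
    linarith
  have hmixed {i k : σ} (hik : i ≠ k) : ∑ j, c j + c i + c k + 4 * d = 0 := by
    let m : σ →₀ ℕ := single i 1 + single k 1
    have hE : ∑ j, (m j : ℝ) * (m j + 1) = 4 := by
      rw [Fintype.sum_eq_add i k hik fun j hj => by simp [m, hj.1, hj.2]]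
      norm_num [m, hik, hik.symm]
    have hik' := h m (by simp [m, degree_single])
    rw [hE] at hik'
    simp only [m, Finsupp.coe_add, Pi.add_apply, single_apply, Nat.cast_add, Nat.cast_ite,
      Nat.cast_one, CharP.cast_eq_zero, mul_add, mul_ite, mul_one, mul_zero, Finset.sum_add_distrib,
      Finset.sum_ite_eq, Finset.mem_univ, ↓reduceIte] at hik'
    linarith
  obtain ⟨i, k, hik⟩ := Fintype.exists_pair_of_one_lt_card hσ
  have hd : d = 0 := by linarith [hsquare i, hsquare k, hmixed hik]
  set S := ∑ j, c j
  have hc (j : σ) : c j = -S / 2 := by linarith [hsquare j]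
  have hS : S = 0 := by
    have hS_eq : S = Fintype.card σ * (-S / 2) :=
      calc S = ∑ _j : σ, -S / 2 := Finset.sum_congr rfl fun j _ => hc j
        _ = Fintype.card σ * (-S / 2) := by simp
    have hcard : (0 : ℝ) ≤ Fintype.card σ := by positivity
    nlinarith
  exact ⟨funext fun j => by simp [hc j, hS], hd⟩

noncomputable def partialsAndPolarE2 (n : ℕ) (f : MvPolynomial (Fin n) ℝ) :
    Fin n ⊕ Unit → MvPolynomial (Fin n) ℝ :=
  Sum.elim (fun j => pderiv j f) fun _ => polarE2 n f

theorem exceptionSpan_eq_span_range (n : ℕ) (f : MvPolynomial (Fin n) ℝ) :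
    exceptionSpan n f = Submodule.span ℝ (Set.range (partialsAndPolarE2 n f)) := by
  rw [exceptionSpan, partialsAndPolarE2, Set.Sum.elim_range, Set.range_const]

theorem linearIndependent_partialsAndPolarE2_hsym3 {n : ℕ} (hn : 2 ≤ n) :
    LinearIndependent ℝ (partialsAndPolarE2 n (hsym3 n)) := by
  rw [Fintype.linearIndependent_iff]
  intro g hg
  have hrel (m : Fin n →₀ ℕ) (hm : m.degree = 2) :
      ∑ j, g (.inl j) * (m j + 1) + g (.inr ()) * ∑ j, (m j : ℝ) * (m j + 1) = 0 := by
    have hm' := congrArg (coeff m) hg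
    simpa [Fintype.sum_sum_type, partialsAndPolarE2, coeff_sum, coeff_pderiv_hsym3 _ hm,
      coeff_polarE2_hsym3 hm] using hm'
  obtain ⟨hc, hd⟩ := eq_zero_of_forall_degree_eq_two (by rw [Fintype.card_fin]; omega) hrel
  rintro (j | ⟨⟩)
  · exact congrFun hc j
  · exact hd

/-- For `n ≥ 3`, `h_3` is not an `n`-exception: the span of its first-order
partials together with `E^{(2)}(h_3)` has dimension `n + 1`. -/
theorem hsym3_not_exception (n : ℕ) (hn : 3 ≤ n) :
    Module.finrank ℝ (exceptionSpan n (hsym3 n)) = n + 1 := by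
  rw [exceptionSpan_eq_span_range,
    finrank_span_eq_card (linearIndependent_partialsAndPolarE2_hsym3 (by omega))]
  simp
end

section
/- For n ≥ 3, the monomial symmetric polynomial m_{21} = Σ_{i≠j} x_i² x_j is not an n-exception: the span of its n first-order partial derivatives together with E^{(2)}(m_{21}) has dimension n+1. -/
open MvPolynomial

lemma pderiv_ofNat' (n : ℕ) (j : Fin n) (m : ℕ) [m.AtLeastTwo] :
    pderiv j (no_index (OfNat.ofNat m) : MvPolynomial (Fin n) ℝ) = 0 := by
  rw [show (OfNat.ofNat m : MvPolynomial (Fin n) ℝ) = C (OfNat.ofNat m)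
    from (map_ofNat C m).symm, pderiv_C]

lemma msym21_eq (n : ℕ) : msym21 n =
    (∑ i : Fin n, X i^2) * (∑ j : Fin n, X j) - ∑ i : Fin n, X i^3 := by
  rw [msym21, Finset.sum_mul, ← Finset.sum_sub_distrib]
  refine Finset.sum_congr rfl fun i _ => ?_
  have h : ∀ j : Fin n, (if i = j then 0 else X i ^ 2 * X j : MvPolynomial (Fin n) ℝ)
      = X i^2 * X j - (if i = j then X i^2 * X j else 0) := by
    intro j; split <;> simp
  rw [Finset.sum_congr rfl (fun j _ => h j), Finset.sum_sub_distrib, Finset.sum_ite_eq,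
    if_pos (Finset.mem_univ i), Finset.mul_sum]
  ring

lemma pderiv_msym21 (n : ℕ) (k : Fin n) :
    pderiv k (msym21 n) = 2 * X k * (∑ j : Fin n, X j) - 3 * X k^2 + ∑ j : Fin n, X j^2 := by
  rw [msym21_eq]
  simp only [map_sub, map_sum, pderiv_mul, pderiv_X, pderiv_pow, Pi.single_apply, mul_ite,
    mul_one, mul_zero, Finset.sum_ite_eq', Finset.mem_univ, if_true]
  push_cast
  ring

lemma E2_msym21 (n : ℕ) :
    polarE2 n (msym21 n) = 2 * (∑ j : Fin n, X j)^2 - 2 * ∑ j : Fin n, X j^2 := by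
  have step : ∀ j : Fin n, X j * pderiv j (pderiv j (msym21 n))
      = 2 * X j * (∑ i : Fin n, X i) - 2 * X j * X j := by
    intro j
    rw [pderiv_msym21]
    simp only [map_add, map_sub, map_sum, pderiv_mul, pderiv_X, pderiv_pow, pderiv_ofNat',
      Pi.single_apply, mul_ite, mul_one, mul_zero, zero_mul,
      Finset.sum_ite_eq', Finset.mem_univ, if_true]
    push_cast
    ring
  rw [polarE2, Finset.sum_congr rfl (fun j _ => step j), Finset.sum_sub_distrib,
    ← Finset.sum_mul]
  rw [show (∑ j : Fin n, 2 * X j : MvPolynomial (Fin n) ℝ) = 2 * ∑ j : Fin n, X j from by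
    rw [Finset.mul_sum]]
  rw [show (∑ j : Fin n, 2 * X j * X j : MvPolynomial (Fin n) ℝ)
      = 2 * ∑ j : Fin n, X j ^ 2 from by
    rw [Finset.mul_sum]; exact Finset.sum_congr rfl fun j _ => by ring]
  ring

lemma eval_pderiv_msym21 (n : ℕ) (k : Fin n) (p : Fin n → ℝ) :
    eval p (pderiv k (msym21 n))
      = 2 * p k * (∑ j : Fin n, p j) - 3 * (p k)^2 + ∑ j : Fin n, (p j)^2 := by
  rw [pderiv_msym21]; simp

lemma eval_E2_msym21 (n : ℕ) (p : Fin n → ℝ) :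
    eval p (polarE2 n (msym21 n))
      = 2 * (∑ j : Fin n, p j)^2 - 2 * ∑ j : Fin n, (p j)^2 := by
  rw [E2_msym21]; simp


/-- For `n ≥ 3`, `m_{21}` is not an `n`-exception: the span of its first-order
partials together with `E^{(2)}(m_{21})` has dimension `n + 1`. -/
theorem msym21_not_exception (n : ℕ) (hn : 3 ≤ n) :
    Module.finrank ℝ (exceptionSpan n (msym21 n)) = n + 1 := by
  set d : Fin n → MvPolynomial (Fin n) ℝ := fun j => pderiv j (msym21 n) with hd
  set e : MvPolynomial (Fin n) ℝ := polarE2 n (msym21 n) with he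
  set v : Fin (n + 1) → MvPolynomial (Fin n) ℝ := Fin.cons e d with hv
  have hset : Set.range (fun j : Fin n => pderiv j (msym21 n)) ∪ {e} = Set.range v := by
    rw [hv, Fin.range_cons, Set.union_singleton]
  have hli : LinearIndependent ℝ v := by
    rw [Fintype.linearIndependent_iff]
    intro g hg
    have key : ∀ p : Fin n → ℝ,
        g 0 * (2 * (∑ j : Fin n, p j)^2 - 2 * ∑ j : Fin n, (p j)^2)
          + ∑ i : Fin n, g i.succ *
            (2 * p i * (∑ j : Fin n, p j) - 3 * (p i)^2 + ∑ j : Fin n, (p j)^2) = 0 := by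
      intro p
      have h0 := congrArg (eval p) hg
      rw [map_sum] at h0
      simpa [Fin.sum_univ_succ, hv, smul_eval, eval_pderiv_msym21, eval_E2_msym21, hd, he]
        using h0
    have hm : ∀ m : Fin n, (∑ i : Fin n, g i.succ) - g m.succ = 0 := by
      intro m
      have hk := key (fun t => if t = m then 1 else 0)
      have h1 : (∑ j : Fin n, if j = m then (1:ℝ) else 0) = 1 := by simp
      have h2 : (∑ j : Fin n, (if j = m then (1:ℝ) else 0)^2) = 1 := by
        rw [Finset.sum_congr rfl fun j _ => show (if j = m then (1:ℝ) else 0)^2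
          = if j = m then 1 else 0 by split <;> norm_num]
        simp
      rw [h1, h2] at hk
      have h3 : ∀ i : Fin n,
          g i.succ * (2 * (if i = m then (1:ℝ) else 0) * 1
            - 3 * (if i = m then (1:ℝ) else 0)^2 + 1)
          = g i.succ - (if i = m then g i.succ else 0) := by
        intro i; split <;> ring
      rw [Finset.sum_congr rfl fun i _ => h3 i, Finset.sum_sub_distrib,
        Finset.sum_ite_eq', if_pos (Finset.mem_univ m)] at hk
      nlinarith [hk]
    have hS : (∑ i : Fin n, g i.succ) = 0 := by
      have h4 : (∑ m : Fin n, g m.succ) = ∑ _m : Fin n, (∑ i : Fin n, g i.succ) :=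
        Finset.sum_congr rfl fun m _ => by linarith [hm m]
      rw [Finset.sum_const, Finset.card_univ, Fintype.card_fin, nsmul_eq_mul] at h4
      have hn3 : (3:ℝ) ≤ (n:ℝ) := by exact_mod_cast hn
      nlinarith [h4]
    have hsucc : ∀ m : Fin n, g m.succ = 0 := by
      intro m; have := hm m; rw [hS] at this; linarith
    have hzero : g 0 = 0 := by
      have hk := key (fun _ => 1)
      simp only [one_pow, mul_one, Finset.sum_const, Finset.card_univ, Fintype.card_fin,
        nsmul_eq_mul] at hk
      have hsum0 : ∑ x : Fin n, g x.succ * (2 * (n:ℝ) - 3 + (n:ℝ)) = 0 :=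
        Finset.sum_eq_zero fun x _ => by rw [hsucc x, zero_mul]
      rw [hsum0, add_zero] at hk
      have hn3 : (3:ℝ) ≤ (n:ℝ) := by exact_mod_cast hn
      have hpos : 0 < 2*(n:ℝ)^2 - 2*(n:ℝ) := by nlinarith
      rcases mul_eq_zero.mp hk with h | h
      · exact h
      · linarith
    intro i
    refine Fin.cases hzero hsucc i
  have : exceptionSpan n (msym21 n) = Submodule.span ℝ (Set.range v) := by
    rw [exceptionSpan, hset]
  rw [this, finrank_span_eq_card hli, Fintype.card_fin]
end

section
/- For any d ≥ 2 and n = d+1, the polynomial f = p_2·p_1^{d−2} in R[x_1,...,x_{d+1}] satisfies: E^{(2)}(f) = Σ_j x_j ∂²f/∂x_j² lies in the linear span of the first-order partial derivatives ∂f/∂x_1, ..., ∂f/∂x_{d+1}; consequently dim span{∂f/∂x_1,...,∂f/∂x_n, E^{(2)}(f)} = n, i.e., f is a (d+1)-exception. -/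
open MvPolynomial

namespace P2P1Aux

noncomputable def p1 (n : ℕ) : MvPolynomial (Fin n) ℝ := ∑ j : Fin n, X j
noncomputable def p2 (n : ℕ) : MvPolynomial (Fin n) ℝ := ∑ j : Fin n, X j ^ 2

lemma pd_p1 {n : ℕ} (j : Fin n) : pderiv j (p1 n) = 1 := by
  rw [p1, map_sum, Finset.sum_eq_single j]
  · simp
  · intro b _ hb; exact pderiv_X_of_ne hb
  · simp

lemma pd_p2 {n : ℕ} (j : Fin n) : pderiv j (p2 n) = 2 * X j := by
  rw [p2, map_sum, Finset.sum_eq_single j]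
  · rw [pderiv_pow, pderiv_X_self]; ring_nf
  · intro k _ hk; rw [pderiv_pow, pderiv_X_of_ne hk]; ring
  · simp

lemma pd_two {n : ℕ} (j : Fin n) : pderiv j (2 : MvPolynomial (Fin n) ℝ) = 0 := by
  rw [← map_ofNat (C : ℝ →+* MvPolynomial (Fin n) ℝ) 2, pderiv_C]

lemma pd_natCast {n e : ℕ} (j : Fin n) : pderiv j ((e : MvPolynomial (Fin n) ℝ)) = 0 := by
  rw [← map_natCast (C : ℝ →+* MvPolynomial (Fin n) ℝ) e, pderiv_C]

lemma pd_f {n : ℕ} (e : ℕ) (j : Fin n) :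
    pderiv j (p2 n * p1 n ^ e)
      = 2 * X j * p1 n ^ e + (e : MvPolynomial (Fin n) ℝ) * (p2 n * p1 n ^ (e - 1)) := by
  rw [pderiv_mul, pd_p2, pderiv_pow, pd_p1]; ring

lemma pd_g {n : ℕ} (e : ℕ) (j : Fin n) :
    pderiv j (2 * X j * p1 n ^ e + (e : MvPolynomial (Fin n) ℝ) * (p2 n * p1 n ^ (e - 1)))
      = 2 * p1 n ^ e + 2 * (e : MvPolynomial (Fin n) ℝ) * X j * p1 n ^ (e - 1)
        + (e : MvPolynomial (Fin n) ℝ) *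
            (2 * X j * p1 n ^ (e - 1)
              + ((e - 1 : ℕ) : MvPolynomial (Fin n) ℝ) * (p2 n * p1 n ^ (e - 1 - 1))) := by
  rw [map_add, pderiv_mul, pderiv_mul, pd_two, pderiv_pow, pd_p1, pderiv_X_self,
    pderiv_mul, pd_natCast, pderiv_mul, pd_p2, pderiv_pow, pd_p1]
  ring

lemma master {m : ℕ} (a b c : MvPolynomial (Fin m) ℝ) :
    (∑ j : Fin m, (a * X j + b * X j ^ 2 + c))
      = a * p1 m + b * p2 m + (m : MvPolynomial (Fin m) ℝ) * c := by
  rw [Finset.sum_add_distrib, Finset.sum_add_distrib, ← Finset.mul_sum, ← Finset.mul_sum,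
    Finset.sum_const, Finset.card_univ, Fintype.card_fin, nsmul_eq_mul, p1, p2]

lemma key (e : ℕ) :
    polarE2 (e + 3) (p2 (e + 3) * p1 (e + 3) ^ e)
      = ∑ j : Fin (e + 3), pderiv j (p2 (e + 3) * p1 (e + 3) ^ e) := by
  have step1 : ∀ j : Fin (e + 3),
      X j * pderiv j (pderiv j (p2 (e + 3) * p1 (e + 3) ^ e))
        = (2 * p1 (e + 3) ^ e
            + (e : MvPolynomial (Fin (e + 3)) ℝ) * ((e - 1 : ℕ) : MvPolynomial (Fin (e + 3)) ℝ)
              * (p2 (e + 3) * p1 (e + 3) ^ (e - 1 - 1))) * X j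
          + (4 * (e : MvPolynomial (Fin (e + 3)) ℝ) * p1 (e + 3) ^ (e - 1)) * X j ^ 2 + 0 := by
    intro j
    rw [pd_f, pd_g]; ring
  have step2 : ∀ j : Fin (e + 3),
      pderiv j (p2 (e + 3) * p1 (e + 3) ^ e)
        = (2 * p1 (e + 3) ^ e) * X j + 0 * X j ^ 2
          + (e : MvPolynomial (Fin (e + 3)) ℝ) * (p2 (e + 3) * p1 (e + 3) ^ (e - 1)) := by
    intro j
    rw [pd_f]; ring
  rw [polarE2, Finset.sum_congr rfl (fun j _ => step1 j), master,
    Finset.sum_congr rfl (fun j _ => step2 j), master]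
  rcases e with _ | _ | k
  · norm_num
  · norm_num
  · simp only [Nat.succ_sub_one]
    push_cast
    ring

lemma indep (e : ℕ) :
    LinearIndependent ℝ (fun j : Fin (e + 3) => pderiv j (p2 (e + 3) * p1 (e + 3) ^ e)) := by
  rw [Fintype.linearIndependent_iff]
  intro c hc
  have hev : ∀ i : Fin (e + 3), 2 * c i + (e : ℝ) * (∑ j : Fin (e + 3), c j) = 0 := by
    intro i
    have h := congrArg (eval fun k : Fin (e + 3) => if k = i then (1 : ℝ) else 0) hc
    rw [map_sum, map_zero] at h
    have e1 : eval (fun k : Fin (e + 3) => if k = i then (1 : ℝ) else 0) (p1 (e + 3)) = 1 := by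
      rw [p1, map_sum, Finset.sum_eq_single i] <;> simp
    have e2 : eval (fun k : Fin (e + 3) => if k = i then (1 : ℝ) else 0) (p2 (e + 3)) = 1 := by
      rw [p2, map_sum, Finset.sum_eq_single i] <;> simp +contextual
    have hterm : ∀ j : Fin (e + 3),
        eval (fun k : Fin (e + 3) => if k = i then (1 : ℝ) else 0)
            (c j • pderiv j (p2 (e + 3) * p1 (e + 3) ^ e))
          = (if j = i then 2 * c j else 0) + (e : ℝ) * c j := by
      intro j
      rw [smul_eval, pd_f]
      simp only [map_add, map_mul, map_pow, map_natCast, map_ofNat, eval_X, e1, e2, one_pow,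
        mul_one]
      split_ifs <;> ring
    rw [Finset.sum_congr rfl (fun j _ => hterm j), Finset.sum_add_distrib,
      Finset.sum_ite_eq' Finset.univ i (fun j => 2 * c j), ← Finset.mul_sum] at h
    simpa using h
  have hS : (∑ j : Fin (e + 3), c j) = 0 := by
    have h := Finset.sum_congr rfl (fun i (_ : i ∈ Finset.univ) => hev i)
    rw [Finset.sum_add_distrib, ← Finset.mul_sum, Finset.sum_const, Finset.card_univ,
      Fintype.card_fin, Finset.sum_const, Finset.card_univ, Fintype.card_fin] at h
    simp only [smul_eq_mul, nsmul_eq_mul, mul_zero] at h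
    have h' : (∑ j : Fin (e + 3), c j) * (2 + ((e : ℝ) + 3) * e) = 0 := by
      push_cast at h ⊢
      linear_combination h
    have hpos : (0 : ℝ) < 2 + ((e : ℝ) + 3) * e := by positivity
    rcases mul_eq_zero.1 h' with h0 | h0
    · exact h0
    · linarith
  intro i
  have := hev i
  rw [hS] at this
  linarith

lemma main_aux (e : ℕ) :
    polarE2 (e + 3) (p2 (e + 3) * p1 (e + 3) ^ e) ∈
        Submodule.span ℝ
          (Set.range (fun j : Fin (e + 3) => pderiv j (p2 (e + 3) * p1 (e + 3) ^ e))) ∧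
      IsException (e + 3) (p2 (e + 3) * p1 (e + 3) ^ e) := by
  have hmem : polarE2 (e + 3) (p2 (e + 3) * p1 (e + 3) ^ e) ∈
      Submodule.span ℝ
        (Set.range (fun j : Fin (e + 3) => pderiv j (p2 (e + 3) * p1 (e + 3) ^ e))) := by
    rw [key]
    exact Submodule.sum_mem _ fun j _ => Submodule.subset_span ⟨j, rfl⟩
  refine ⟨hmem, ?_⟩
  unfold IsException exceptionSpan
  have hspan : Submodule.span ℝ
      (Set.range (fun j : Fin (e + 3) => pderiv j (p2 (e + 3) * p1 (e + 3) ^ e)) ∪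
        {polarE2 (e + 3) (p2 (e + 3) * p1 (e + 3) ^ e)})
      = Submodule.span ℝ
          (Set.range (fun j : Fin (e + 3) => pderiv j (p2 (e + 3) * p1 (e + 3) ^ e))) := by
    rw [Submodule.span_union]
    refine sup_eq_left.2 ?_
    rw [Submodule.span_singleton_le_iff_mem]
    exact hmem
  rw [hspan, finrank_span_eq_card (indep e), Fintype.card_fin]

end P2P1Aux

/-- For `d ≥ 2` and `n = d + 1`, `f = p_2 · p_1^{d−2}` satisfies
`E^{(2)}(f) ∈ span{∂f/∂x_1, …, ∂f/∂x_n}`, and consequently `f` is a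
`(d+1)`-exception. -/
theorem p2_p1_pow_exception (d : ℕ) (hd : 2 ≤ d) :
    let n := d + 1
    let f : MvPolynomial (Fin n) ℝ :=
      (∑ j : Fin n, X j ^ 2) * (∑ j : Fin n, X j) ^ (d - 2)
    polarE2 n f ∈ Submodule.span ℝ (Set.range (fun j : Fin n => pderiv j f)) ∧
      IsException n f := by
  intro n f
  obtain ⟨e, rfl⟩ : ∃ e, d = e + 2 := ⟨d - 2, by omega⟩
  exact P2P1Aux.main_aux e
end
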